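/- arXiv:2205.06515 — 4 statements merged into one kernel-verified Lean document; each statement's English description precedes it below -/
import Mathlib

section
/- Let d ≥ 2, λ₁ ≥ λ₂ ≥ ⋯ ≥ λ_d ≥ 0, and n₀, n₁, n₂ > 0 with n₁ ≥ n₂. Define R_a = λ₁/(n₀+n₁) + λ₂/(n₀+n₂) + ∑_{j≥3} λ_j/n₀ (different directions) and R_b = λ₁/(n₀+n₁+n₂) + ∑_{j≥2} λ_j/n₀ (same direction). Then R_b ≤ R_a if and only if λ₁/λ₂ ≥ (n₀+n₁)(n₀+n₁+n₂)/(n₀(n₀+n₂)) (with λ₂ > 0; if λ₂ = 0 then R_b ≤ R_a always). -/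
open Finset

theorem Finset.sum_sdiff_singleton_eq_add_sum_sdiff_pair {ι M : Type*} [DecidableEq ι]
    [AddCommMonoid M] (s : Finset ι) (f : ι → M) {a b : ι} (hb : b ∈ s) (hba : b ≠ a) :
    ∑ j ∈ s \ {a}, f j = f b + ∑ j ∈ s \ {a, b}, f j := by
  rw [Finset.pair_comm, Finset.sdiff_insert,
    Finset.add_sum_erase _ _ (by simp [hb, hba])]

section TwoNodeRisk

variable {A B n₀ n₁ n₂ : ℝ}

/-- Both strategies spend the extra `n₂` samples: strategy (a) on the second direction,
strategy (b) on the first, so the gap is `n₂` times the difference of the marginal gains. -/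
theorem two_node_risk_sub (hn₀ : 0 < n₀) (hn₁ : 0 < n₁) (hn₂ : 0 < n₂) :
    (A / (n₀ + n₁) + B / (n₀ + n₂)) - (A / (n₀ + n₁ + n₂) + B / n₀)
      = n₂ * (A / ((n₀ + n₁) * (n₀ + n₁ + n₂)) - B / (n₀ * (n₀ + n₂))) := by
  field_simp
  ring

theorem two_node_risk_le_iff (hn₀ : 0 < n₀) (hn₁ : 0 < n₁) (hn₂ : 0 < n₂) (hB : 0 < B) :
    A / (n₀ + n₁ + n₂) + B / n₀ ≤ A / (n₀ + n₁) + B / (n₀ + n₂)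
      ↔ (n₀ + n₁) * (n₀ + n₁ + n₂) / (n₀ * (n₀ + n₂)) ≤ A / B := by
  rw [← sub_nonneg, two_node_risk_sub hn₀ hn₁ hn₂, mul_nonneg_iff_of_pos_left hn₂, sub_nonneg,
    div_le_div_iff₀ (by positivity) (by positivity), div_le_div_iff₀ (by positivity) hB,
    mul_comm B]

theorem two_node_risk_le_of_eq_zero (hn₀ : 0 < n₀) (hn₁ : 0 < n₁) (hn₂ : 0 < n₂)
    (hA : 0 ≤ A) (hB : B = 0) :
    A / (n₀ + n₁ + n₂) + B / n₀ ≤ A / (n₀ + n₁) + B / (n₀ + n₂) := by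
  rw [← sub_nonneg, two_node_risk_sub hn₀ hn₁ hn₂, hB, zero_div, sub_zero]
  positivity

end TwoNodeRisk

/-- Two-node transmission: comparison of strategy (a) (different directions) and
strategy (b) (same direction) via the eigenvalue-ratio test. -/
theorem stmt_4 {d : ℕ} (hd : 2 ≤ d) (lam : Fin d → ℝ)
    (hnonneg : ∀ j, 0 ≤ lam j) (n₀ n₁ n₂ : ℝ)
    (hn₀ : 0 < n₀) (hn₁ : 0 < n₁) (hn₂ : 0 < n₂) :
    (0 < lam ⟨1, by omega⟩ →
      (lam ⟨0, by omega⟩ / (n₀ + n₁ + n₂) + ∑ j ∈ univ \ {(⟨0, by omega⟩ : Fin d)}, lam j / n₀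
          ≤ lam ⟨0, by omega⟩ / (n₀ + n₁) + lam ⟨1, by omega⟩ / (n₀ + n₂)
            + ∑ j ∈ univ \ {(⟨0, by omega⟩ : Fin d), (⟨1, by omega⟩ : Fin d)}, lam j / n₀
        ↔ (n₀ + n₁) * (n₀ + n₁ + n₂) / (n₀ * (n₀ + n₂))
            ≤ lam ⟨0, by omega⟩ / lam ⟨1, by omega⟩)) ∧
    (lam ⟨1, by omega⟩ = 0 →
      lam ⟨0, by omega⟩ / (n₀ + n₁ + n₂) + ∑ j ∈ univ \ {(⟨0, by omega⟩ : Fin d)}, lam j / n₀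
        ≤ lam ⟨0, by omega⟩ / (n₀ + n₁) + lam ⟨1, by omega⟩ / (n₀ + n₂)
          + ∑ j ∈ univ \ {(⟨0, by omega⟩ : Fin d), (⟨1, by omega⟩ : Fin d)}, lam j / n₀) := by
  have hne : (⟨1, by omega⟩ : Fin d) ≠ ⟨0, by omega⟩ := by simp [Fin.ext_iff]
  rw [sum_sdiff_singleton_eq_add_sum_sdiff_pair univ (fun j => lam j / n₀) (mem_univ _) hne,
    ← add_assoc, add_le_add_iff_right]
  exact ⟨two_node_risk_le_iff hn₀ hn₁ hn₂,
    two_node_risk_le_of_eq_zero hn₀ hn₁ hn₂ (hnonneg _)⟩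
end

section
/- Let λ₁ ≥ λ₂ ≥ ⋯ ≥ λ_d ≥ 0, n₀ > 0, and n₁,…,n_k > 0 with k ≤ d. For any assignment c : {1,…,k} → {1,…,d}, define R(c) = ∑_{j=1}^{d} λ_j / (n₀ + ∑_{i: cᵢ = j} nᵢ). Then there exists an optimal assignment c* minimizing R with the property that the range of c* is contained in {1,…,k}, i.e., only the k largest-eigenvalue directions need ever be used. -/
/-!
Moving every node of a direction `j₀ ≥ k` onto a direction `j' < k` that no node uses is
the transposition `j₀ ↔ j'` of the directions. It pairs the larger eigenvalue `λ j'` with the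
larger load, and since `L ↦ 1 / (n₀ + L)` is decreasing this cannot increase the risk (a
two-term rearrangement inequality). Such a free `j'` exists by pigeonhole as long as some node
sits outside the first `k` directions, and each move lowers the number of such nodes, so a
minimiser can be pushed into the first `k` directions without losing optimality.
-/

open Finset

lemma div_add_div_le_div_add_div_of_le {a b p q : ℝ} (hp : 0 < p) (hpq : p ≤ q) (hba : b ≤ a) :
    a / q + b / p ≤ a / p + b / q := by
  have hinv : 1 / q ≤ 1 / p := one_div_le_one_div_of_le hp hpq
  have key := mul_le_mul_of_nonneg_left hinv (sub_nonneg.2 hba)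
  simp only [div_eq_mul_one_div a, div_eq_mul_one_div b]
  nlinarith

section Assignment

variable {ι δ : Type*} [Fintype ι] [DecidableEq δ]

def load (n : ι → ℝ) (c : ι → δ) (j : δ) : ℝ :=
  ∑ i ∈ univ.filter (fun i => c i = j), n i

noncomputable def risk [Fintype δ] (lam : δ → ℝ) (n₀ : ℝ) (n : ι → ℝ) (c : ι → δ) : ℝ :=
  ∑ j, lam j / (n₀ + load n c j)

lemma load_nonneg {n : ι → ℝ} (hn : ∀ i, 0 ≤ n i) (c : ι → δ) (j : δ) : 0 ≤ load n c j :=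
  sum_nonneg fun i _ => hn i

lemma load_eq_zero_of_notMem_range (n : ι → ℝ) {c : ι → δ} {j : δ} (hj : j ∉ Set.range c) :
    load n c j = 0 :=
  sum_eq_zero fun i hi => absurd ⟨i, (mem_filter.1 hi).2⟩ hj

lemma load_comp_equiv (n : ι → ℝ) (c : ι → δ) (σ : δ ≃ δ) (j : δ) :
    load n (σ ∘ c) j = load n c (σ.symm j) := by
  simp only [load, Function.comp_apply, ← Equiv.eq_symm_apply]

lemma risk_comp_equiv [Fintype δ] (lam : δ → ℝ) (n₀ : ℝ) (n : ι → ℝ) (c : ι → δ)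
    (σ : δ ≃ δ) : risk lam n₀ n (σ ∘ c) = ∑ j, lam (σ j) / (n₀ + load n c j) := by
  simp only [risk, load_comp_equiv]
  rw [← σ.sum_comp]
  simp only [Equiv.symm_apply_apply]

lemma risk_swap_comp_le [Fintype δ] {lam : δ → ℝ} {n₀ : ℝ} (hn₀ : 0 < n₀) {n : ι → ℝ}
    (hn : ∀ i, 0 ≤ n i) (c : ι → δ) {j₀ j' : δ} (hlam : lam j₀ ≤ lam j')
    (hload : load n c j' ≤ load n c j₀) :
    risk lam n₀ n (Equiv.swap j₀ j' ∘ c) ≤ risk lam n₀ n c := by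
  rcases eq_or_ne j₀ j' with rfl | hne
  · simp
  set new := fun j => lam (Equiv.swap j₀ j' j) / (n₀ + load n c j)
  set old := fun j => lam j / (n₀ + load n c j)
  have hpair : ∑ j, (new j - old j) = (new j₀ - old j₀) + (new j' - old j') :=
    Fintype.sum_eq_add j₀ j' hne fun j hj => by
      simp [new, old, Equiv.swap_apply_of_ne_of_ne hj.1 hj.2]
  have hrearr := div_add_div_le_div_add_div_of_le (add_pos_of_pos_of_nonneg hn₀
    (load_nonneg hn c j')) (add_le_add_right hload n₀) hlam
  rw [sum_sub_distrib] at hpair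
  rw [risk_comp_equiv, risk]
  simp only [new, old, Equiv.swap_apply_left, Equiv.swap_apply_right] at hpair
  linarith

end Assignment

lemma exists_lt_notMem_range {ι : Type*} [Fintype ι] {k d : ℕ} (hι : Fintype.card ι ≤ k)
    (c : ι → Fin d) {i₀ : ι} (hi₀ : k ≤ (c i₀ : ℕ)) :
    ∃ j : Fin d, (j : ℕ) < k ∧ j ∉ Set.range c := by
  by_contra! hcover
  have hsub : insert (c i₀) ({j | (j : ℕ) < k} : Finset (Fin d)) ⊆ univ.image c := by
    intro j hj
    rcases mem_insert.1 hj with rfl | hj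
    · exact mem_image_of_mem c (mem_univ i₀)
    · obtain ⟨i, rfl⟩ := hcover j (mem_filter.1 hj).2
      exact mem_image_of_mem c (mem_univ i)
  have hcard := (card_le_card hsub).trans card_image_le
  rw [card_insert_of_notMem (by simp [hi₀]), Fin.card_filter_val_lt, card_univ] at hcard
  have := (c i₀).isLt
  omega

lemma exists_forall_lt_risk_le {ι : Type*} [Fintype ι] {k d : ℕ} (hι : Fintype.card ι ≤ k)
    {lam : Fin d → ℝ} (hmono : Antitone lam) {n₀ : ℝ} (hn₀ : 0 < n₀) {n : ι → ℝ}
    (hn : ∀ i, 0 ≤ n i) (c : ι → Fin d) :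
    ∃ c' : ι → Fin d, (∀ i, (c' i : ℕ) < k) ∧ risk lam n₀ n c' ≤ risk lam n₀ n c := by
  induction hm : #{i | k ≤ (c i : ℕ)} using Nat.strong_induction_on generalizing c with
  | _ m ih =>
  by_cases hout : ∃ i, k ≤ (c i : ℕ)
  swap
  · simp only [not_exists, not_le] at hout
    exact ⟨c, hout, le_rfl⟩
  obtain ⟨i₀, hi₀⟩ := hout
  obtain ⟨j', hj'k, hj'⟩ := exists_lt_notMem_range hι c hi₀
  set c' := Equiv.swap (c i₀) j' ∘ c
  have hle : risk lam n₀ n c' ≤ risk lam n₀ n c :=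
    risk_swap_comp_le hn₀ hn c (hmono (Fin.le_def.2 (by omega)))
      (by rw [load_eq_zero_of_notMem_range n hj']; exact load_nonneg hn c _)
  have hfewer : #{i | k ≤ (c' i : ℕ)} < m := by
    refine hm ▸ card_lt_card ((ssubset_iff_of_subset fun i hi => ?_).2 ⟨i₀, ?_, ?_⟩)
    · simp only [mem_filter, mem_univ, true_and] at hi ⊢
      by_cases hi₀' : c i = c i₀
      · exact hi₀' ▸ hi₀
      · rwa [show c' i = c i from Equiv.swap_apply_of_ne_of_ne hi₀'
          fun h => hj' ⟨i, h⟩] at hi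
    · simpa using hi₀
    · simpa [c'] using hj'k
  obtain ⟨c'', hc''k, hc''le⟩ := ih _ hfewer c' rfl
  exact ⟨c'', hc''k, hc''le.trans hle⟩

theorem stmt_7_general {d k : ℕ} (hkd : k ≤ d) (lam : Fin d → ℝ) (hmono : Antitone lam)
    (n₀ : ℝ) (hn₀ : 0 < n₀)
    (n : Fin k → ℝ) (hn : ∀ i, 0 < n i) :
    ∃ cstar : Fin k → Fin d,
      (∀ c : Fin k → Fin d,
        (∑ j : Fin d, lam j / (n₀ + ∑ i ∈ univ.filter (fun i => cstar i = j), n i))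
          ≤ ∑ j : Fin d, lam j / (n₀ + ∑ i ∈ univ.filter (fun i => c i = j), n i)) ∧
      ∀ i, ((cstar i : ℕ) < k) := by
  have : Nonempty (Fin k → Fin d) := ⟨Fin.castLE hkd⟩
  obtain ⟨c₀, hc₀⟩ := Finite.exists_min (risk lam n₀ n)
  obtain ⟨cstar, hlt, hle⟩ := exists_forall_lt_risk_le (Fintype.card_fin k).le hmono hn₀
    (fun i => (hn i).le) c₀
  exact ⟨cstar, fun c => hle.trans (hc₀ c), hlt⟩

/-- There is an optimal assignment of nodes to eigendirections using only the `k`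
largest-eigenvalue directions. -/
theorem stmt_7 {d k : ℕ} (hkd : k ≤ d) (lam : Fin d → ℝ) (hmono : Antitone lam)
    (hnonneg : ∀ j, 0 ≤ lam j) (n₀ : ℝ) (hn₀ : 0 < n₀)
    (n : Fin k → ℝ) (hn : ∀ i, 0 < n i) :
    ∃ cstar : Fin k → Fin d,
      (∀ c : Fin k → Fin d,
        (∑ j : Fin d, lam j / (n₀ + ∑ i ∈ univ.filter (fun i => cstar i = j), n i))
          ≤ ∑ j : Fin d, lam j / (n₀ + ∑ i ∈ univ.filter (fun i => c i = j), n i)) ∧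
      ∀ i, ((cstar i : ℕ) < k) :=
  stmt_7_general hkd lam hmono n₀ hn₀ n hn
end

section
/- Let H be symmetric PSD with orthonormal eigenbasis v₁,…,v_d and eigenvalues λ₁,…,λ_d, let n₀ > 0, n₁,…,n_k > 0, and let c : {1,…,k} → {1,…,d}. Setting uᵢ = v_{cᵢ}, one has tr[H (n₀ I + ∑_{i=1}^k nᵢ uᵢ uᵢᵀ)⁻¹] = ∑_{j=1}^{d} λ_j / (n₀ + ∑_{i: cᵢ = j} nᵢ). -/
/-!
The projectors `vⱼvⱼᵀ` form a complete family of orthogonal idempotents, so grouping the `nᵢ`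
by `cᵢ` writes `n₀ I + ∑ᵢ nᵢ uᵢuᵢᵀ = ∑ⱼ (n₀ + ∑_{cᵢ = j} nᵢ) vⱼvⱼᵀ`. In such a family inverses and
products act coefficientwise, so `H (n₀ I + ∑ᵢ nᵢ uᵢuᵢᵀ)⁻¹ = ∑ⱼ λⱼ / (n₀ + ∑_{cᵢ = j} nᵢ) vⱼvⱼᵀ`,
and each `vⱼvⱼᵀ` has trace `‖vⱼ‖² = 1`.
-/

open Matrix Finset

section OrthogonalIdempotents

variable {ι R A : Type*} [Fintype ι] [DecidableEq ι] [CommSemiring R] [Semiring A] [Algebra R A]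
  {P : ι → A}

theorem sum_smul_mul_sum_smul_of_orthogonal
    (hP : ∀ a b, P a * P b = if a = b then P a else 0) (x y : ι → R) :
    (∑ i, x i • P i) * (∑ j, y j • P j) = ∑ i, (x i * y i) • P i := by
  simp only [Finset.sum_mul, Finset.mul_sum, smul_mul_smul_comm, hP, smul_ite, smul_zero,
    Finset.sum_ite_eq', Finset.mem_univ, if_true]

end OrthogonalIdempotents

theorem Finset.sum_smul_comp_eq_sum_fiberwise {ι κ R M : Type*} [Fintype ι] [Fintype κ]
    [DecidableEq κ] [Semiring R] [AddCommMonoid M] [Module R M] (x : ι → R) (P : κ → M)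
    (c : ι → κ) :
    ∑ i, x i • P (c i) = ∑ j, (∑ i with c i = j, x i) • P j := by
  rw [← Finset.sum_fiberwise univ c]
  refine Finset.sum_congr rfl fun j _ => ?_
  rw [Finset.sum_smul]
  refine Finset.sum_congr rfl fun i hi => ?_
  rw [(Finset.mem_filter.mp hi).2]

theorem Matrix.inv_sum_smul_of_orthogonal {ι m K : Type*} [Fintype ι] [DecidableEq ι]
    [Fintype m] [DecidableEq m] [Field K] {P : ι → Matrix m m K}
    (hP : ∀ a b, P a * P b = if a = b then P a else 0) (hsum : ∑ i, P i = 1)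
    {x : ι → K} (hx : ∀ i, x i ≠ 0) :
    (∑ i, x i • P i)⁻¹ = ∑ i, (x i)⁻¹ • P i := by
  refine inv_eq_right_inv ?_
  rw [sum_smul_mul_sum_smul_of_orthogonal hP, ← hsum]
  exact Finset.sum_congr rfl fun i _ => by rw [mul_inv_cancel₀ (hx i), one_smul]

section Orthonormal

variable {n R : Type*} [Fintype n] [DecidableEq n] [CommRing R] {v : n → n → R}

theorem vecMulVec_self_mul_vecMulVec_self (hv : ∀ i j, v i ⬝ᵥ v j = if i = j then 1 else 0)
    (a b : n) :
    vecMulVec (v a) (v a) * vecMulVec (v b) (v b) =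
      if a = b then vecMulVec (v a) (v a) else 0 := by
  rw [vecMulVec_mul_vecMulVec, hv]
  split_ifs with h
  · rw [h, one_smul]
  · rw [zero_smul, vecMulVec_zero]

theorem sum_vecMulVec_self_eq_one (hv : ∀ i j, v i ⬝ᵥ v j = if i = j then 1 else 0) :
    ∑ j, vecMulVec (v j) (v j) = 1 := by
  have hrows : of v * (of v)ᵀ = 1 := by
    ext i j
    simpa [Matrix.mul_apply, Matrix.one_apply, dotProduct] using hv i j
  have hcols : (of v)ᵀ * of v = 1 := mul_eq_one_comm.mp hrows
  rw [← hcols]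
  ext i j
  simp [Matrix.mul_apply, Matrix.sum_apply, vecMulVec_apply]

end Orthonormal

theorem stmt_11_general {d k : ℕ} (lam : Fin d → ℝ)
    (v : Fin d → Fin d → ℝ)
    (hortho : ∀ i j, v i ⬝ᵥ v j = if i = j then (1 : ℝ) else 0)
    (H : Matrix (Fin d) (Fin d) ℝ)
    (hH : H = ∑ j, lam j • vecMulVec (v j) (v j))
    (n₀ : ℝ) (hn₀ : 0 < n₀) (n : Fin k → ℝ) (hn : ∀ i, 0 < n i)
    (c : Fin k → Fin d) :
    (H * (n₀ • (1 : Matrix (Fin d) (Fin d) ℝ)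
        + ∑ i, n i • vecMulVec (v (c i)) (v (c i)))⁻¹).trace
      = ∑ j : Fin d, lam j / (n₀ + ∑ i ∈ univ.filter (fun i => c i = j), n i) := by
  set P : Fin d → Matrix (Fin d) (Fin d) ℝ := fun j => vecMulVec (v j) (v j)
  have hP := vecMulVec_self_mul_vecMulVec_self hortho
  have hsum : ∑ j, P j = 1 := sum_vecMulVec_self_eq_one hortho
  have hden (j : Fin d) : n₀ + ∑ i with c i = j, n i ≠ 0 :=
    (add_pos_of_pos_of_nonneg hn₀ (Finset.sum_nonneg fun i _ => (hn i).le)).ne'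
  rw [hH, ← hsum, Finset.smul_sum, Finset.sum_smul_comp_eq_sum_fiberwise n P c,
    ← Finset.sum_add_distrib]
  simp_rw [← add_smul]
  rw [Matrix.inv_sum_smul_of_orthogonal hP hsum hden, sum_smul_mul_sum_smul_of_orthogonal hP,
    trace_sum]
  simp [trace_smul, hortho, div_eq_mul_inv]

/-- Reduction of the matrix optimization to the integer program: with `uᵢ = v_{cᵢ}`
eigenvectors of `H`,
`tr[H (n₀ I + ∑ᵢ nᵢ uᵢuᵢᵀ)⁻¹] = ∑ⱼ λⱼ/(n₀ + ∑_{i : cᵢ = j} nᵢ)`. -/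
theorem stmt_11 {d k : ℕ} (lam : Fin d → ℝ) (hlam : ∀ j, 0 ≤ lam j)
    (v : Fin d → Fin d → ℝ)
    (hortho : ∀ i j, v i ⬝ᵥ v j = if i = j then (1 : ℝ) else 0)
    (H : Matrix (Fin d) (Fin d) ℝ)
    (hH : H = ∑ j, lam j • vecMulVec (v j) (v j))
    (n₀ : ℝ) (hn₀ : 0 < n₀) (n : Fin k → ℝ) (hn : ∀ i, 0 < n i)
    (c : Fin k → Fin d) :
    (H * (n₀ • (1 : Matrix (Fin d) (Fin d) ℝ)
        + ∑ i, n i • vecMulVec (v (c i)) (v (c i)))⁻¹).trace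
      = ∑ j : Fin d, lam j / (n₀ + ∑ i ∈ univ.filter (fun i => c i = j), n i) :=
  stmt_11_general lam v hortho H hH n₀ hn₀ n hn c
end

section
/- Let λ₁ ≥ λ₂ ≥ ⋯ ≥ λ_d ≥ 0, n₀ > 0, and n₁ ≥ n₂ ≥ ⋯ ≥ n_k > 0 with k ≤ d. If the eigenvalues satisfy λ₁ = λ₂ = ⋯ = λ_k > 0, then the assignment cᵢ = i (each node to a distinct direction) minimizes R(c) = ∑_{j=1}^d λ_j/(n₀ + ∑_{i: cᵢ=j} nᵢ) over all assignments c : {1,…,k} → {1,…,d}. -/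
/-!
Write `L` for the common top eigenvalue. Since `s ↦ L / (n₀ + s)` is convex with a finite
value at `0`, the drop `L / n₀ - L / (n₀ + s)` is subadditive on `s ≥ 0`: a direction that
receives total sample mass `∑ nᵢ` loses less risk than if the masses `nᵢ` were spread over
separate top directions. As every `λⱼ ≤ L`, the same bound holds for each direction `j`, so
`R(c) ≥ ∑ⱼ λⱼ / n₀ - ∑ᵢ (L / n₀ - L / (n₀ + nᵢ))` for every assignment `c`, with equality
for any injective assignment into directions of eigenvalue `L`, such as `cᵢ = i`.
-/

open Finset

noncomputable def assignmentRisk {ι κ : Type*} [Fintype ι] [Fintype κ] [DecidableEq ι]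
    (lam : ι → ℝ) (n₀ : ℝ) (n : κ → ℝ) (c : κ → ι) : ℝ :=
  ∑ j, lam j / (n₀ + ∑ i ∈ univ.filter (fun i => c i = j), n i)

noncomputable def riskDrop (L n₀ s : ℝ) : ℝ := L / n₀ - L / (n₀ + s)

section RiskDrop

variable {L n₀ : ℝ}

lemma riskDrop_add_le (hL : 0 ≤ L) (hn₀ : 0 < n₀) {a b : ℝ} (ha : 0 ≤ a) (hb : 0 ≤ b) :
    riskDrop L n₀ (a + b) ≤ riskDrop L n₀ a + riskDrop L n₀ b := by
  have key : riskDrop L n₀ a + riskDrop L n₀ b - riskDrop L n₀ (a + b)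
      = L * a * b * (2 * n₀ + a + b) / (n₀ * (n₀ + a) * (n₀ + b) * (n₀ + (a + b))) := by
    unfold riskDrop
    field_simp
    ring
  have : 0 ≤ L * a * b * (2 * n₀ + a + b) / (n₀ * (n₀ + a) * (n₀ + b) * (n₀ + (a + b))) := by
    positivity
  linarith

lemma riskDrop_sum_le (hL : 0 ≤ L) (hn₀ : 0 < n₀) {κ : Type*} (T : Finset κ) {f : κ → ℝ}
    (hf : ∀ i ∈ T, 0 ≤ f i) :
    riskDrop L n₀ (∑ i ∈ T, f i) ≤ ∑ i ∈ T, riskDrop L n₀ (f i) :=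
  le_sum_of_subadditive_on_pred (riskDrop L n₀) (0 ≤ ·) (by simp [riskDrop])
    (fun _ _ => riskDrop_add_le hL hn₀) (fun _ _ => add_nonneg) f hf

lemma riskDrop_le_of_le {lam : ℝ} (hlam : lam ≤ L) (hn₀ : 0 < n₀) {s : ℝ} (hs : 0 ≤ s) :
    riskDrop lam n₀ s ≤ riskDrop L n₀ s := by
  have hdiff : riskDrop L n₀ s - riskDrop lam n₀ s = (L - lam) * (1 / n₀ - 1 / (n₀ + s)) := by
    unfold riskDrop
    ring
  have : 1 / (n₀ + s) ≤ 1 / n₀ := one_div_le_one_div_of_le hn₀ (by linarith)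
  nlinarith

end RiskDrop

section AssignmentRisk

variable {ι κ : Type*} [Fintype ι] [Fintype κ] [DecidableEq ι]
  {lam : ι → ℝ} {L n₀ : ℝ} {n : κ → ℝ}

lemma assignmentRisk_eq (c : κ → ι) :
    assignmentRisk lam n₀ n c
      = ∑ j, lam j / n₀ - ∑ j, riskDrop (lam j) n₀ (∑ i ∈ univ.filter (fun i => c i = j), n i) := by
  simp only [assignmentRisk, riskDrop, sum_sub_distrib, sub_sub_cancel]

lemma sum_sub_sum_riskDrop_le_assignmentRisk (hL : 0 ≤ L) (hlam : ∀ j, lam j ≤ L)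
    (hn₀ : 0 < n₀) (hn : ∀ i, 0 ≤ n i) (c : κ → ι) :
    ∑ j, lam j / n₀ - ∑ i, riskDrop L n₀ (n i) ≤ assignmentRisk lam n₀ n c := by
  rw [assignmentRisk_eq, ← sum_fiberwise univ c]
  gcongr with j
  calc riskDrop (lam j) n₀ (∑ i ∈ univ.filter (fun i => c i = j), n i)
      ≤ riskDrop L n₀ (∑ i ∈ univ.filter (fun i => c i = j), n i) :=
        riskDrop_le_of_le (hlam j) hn₀ (sum_nonneg fun i _ => hn i)
    _ ≤ _ := riskDrop_sum_le hL hn₀ _ fun i _ => hn i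

lemma assignmentRisk_of_injective {c : κ → ι} (hc : Function.Injective c)
    (hcL : ∀ i, lam (c i) = L) :
    assignmentRisk lam n₀ n c = ∑ j, lam j / n₀ - ∑ i, riskDrop L n₀ (n i) := by
  rw [assignmentRisk_eq, ← sum_fiberwise univ c]
  congr 1
  refine sum_congr rfl fun j _ => ?_
  by_cases hj : ∃ i, c i = j
  · obtain ⟨i, rfl⟩ := hj
    have hfiber : univ.filter (fun i' => c i' = c i) = {i} := by
      ext i'
      simp [hc.eq_iff]
    simp [hfiber, hcL]
  · push Not at hj
    have hfiber : univ.filter (fun i => c i = j) = ∅ := filter_false_of_mem fun i _ => hj i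
    simp [hfiber, riskDrop]

end AssignmentRisk

theorem stmt_16_general {d k : ℕ} (hk : 0 < k) (hkd : k ≤ d) (lam : Fin d → ℝ)
    (hmono : Antitone lam)
    (heq : ∀ j : Fin d, (j : ℕ) < k → lam j = lam ⟨0, lt_of_lt_of_le hk hkd⟩)
    (hpos : 0 < lam ⟨0, lt_of_lt_of_le hk hkd⟩)
    (n₀ : ℝ) (hn₀ : 0 < n₀) (n : Fin k → ℝ) (hn : ∀ i, 0 < n i) :
    ∀ c : Fin k → Fin d,
      (∑ j : Fin d, lam j / (n₀ + ∑ i ∈ univ.filter (fun i => Fin.castLE hkd i = j), n i))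
        ≤ ∑ j : Fin d, lam j / (n₀ + ∑ i ∈ univ.filter (fun i => c i = j), n i) := by
  intro c
  have hlam : ∀ j, lam j ≤ lam ⟨0, lt_of_lt_of_le hk hkd⟩ := fun j => hmono (Nat.zero_le j)
  have hcastLE : ∀ i, lam (Fin.castLE hkd i) = lam ⟨0, lt_of_lt_of_le hk hkd⟩ :=
    fun i => heq _ i.isLt
  change assignmentRisk lam n₀ n (Fin.castLE hkd) ≤ assignmentRisk lam n₀ n c
  rw [assignmentRisk_of_injective (Fin.castLE_injective hkd) hcastLE]
  exact sum_sub_sum_riskDrop_le_assignmentRisk hpos.le hlam hn₀ (fun i => (hn i).le) c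

/-- If the top `k` eigenvalues are equal and positive, assigning each of the `k` nodes
to a distinct top direction (`cᵢ = i`) minimizes the risk over all assignments. -/
theorem stmt_16 {d k : ℕ} (hk : 0 < k) (hkd : k ≤ d) (lam : Fin d → ℝ)
    (hmono : Antitone lam) (hnonneg : ∀ j, 0 ≤ lam j)
    (heq : ∀ j : Fin d, (j : ℕ) < k → lam j = lam ⟨0, lt_of_lt_of_le hk hkd⟩)
    (hpos : 0 < lam ⟨0, lt_of_lt_of_le hk hkd⟩)
    (n₀ : ℝ) (hn₀ : 0 < n₀) (n : Fin k → ℝ) (hn : ∀ i, 0 < n i)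
    (hnmono : Antitone n) :
    ∀ c : Fin k → Fin d,
      (∑ j : Fin d, lam j / (n₀ + ∑ i ∈ univ.filter (fun i => Fin.castLE hkd i = j), n i))
        ≤ ∑ j : Fin d, lam j / (n₀ + ∑ i ∈ univ.filter (fun i => c i = j), n i) :=
  stmt_16_general hk hkd lam hmono heq hpos n₀ hn₀ n hn
end
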